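/- The one-way information deficit Δ→(ρ) = min_{{Π_i}} S(Σ_i (Π_i⊗I)ρ(Π_i⊗I)) − S(ρ) is nonnegative for every density matrix ρ on H_A ⊗ H_B, and Δ→(ρ) = 0 if and only if ρ is a classical-quantum state, i.e., ρ = Σ_i p_i |i^A⟩⟨i^A| ⊗ ρ_i^B for some orthonormal basis {|i^A⟩}, probabilities p_i, and density matrices ρ_i^B. -/

import Mathlib

open Matrix Kronecker BigOperators
open scoped ComplexOrder

noncomputable section

/-- The von Neumann entropy `S(ρ) = -Tr[ρ log ρ]`, computed via eigenvalues
(junk value `0` if `ρ` is not Hermitian). -/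
def vnEntropy {n : Type*} [Fintype n] [DecidableEq n] (ρ : Matrix n n ℂ) : ℝ :=
  if h : ρ.IsHermitian then ∑ i, Real.negMulLog (h.eigenvalues i) else 0

/-- The matrix logarithm via the spectral decomposition (junk value `0` if not Hermitian). -/
def matLog {n : Type*} [Fintype n] [DecidableEq n] (ρ : Matrix n n ℂ) : Matrix n n ℂ :=
  if h : ρ.IsHermitian then
    (h.eigenvectorUnitary : Matrix n n ℂ) *
      Matrix.diagonal (fun i => (Real.log (h.eigenvalues i) : ℂ)) *
      (star (h.eigenvectorUnitary : Matrix n n ℂ))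
  else 0

/-- The quantum relative entropy `S(ρ‖σ) = Tr[ρ log ρ] - Tr[ρ log σ]` (finite formula). -/
def relEntropy {n : Type*} [Fintype n] [DecidableEq n] (ρ σ : Matrix n n ℂ) : ℝ :=
  ((ρ * (matLog ρ - matLog σ)).trace).re

/-- A density matrix: positive semidefinite with unit trace. -/
def IsDensityMatrix {n : Type*} [Fintype n] (ρ : Matrix n n ℂ) : Prop :=
  ρ.PosSemidef ∧ ρ.trace = 1

/-- `|x⟩⟨y|`. -/
def ketbra {n : Type*} (x y : n → ℂ) : Matrix n n ℂ := Matrix.vecMulVec x (star y)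

/-- The rank-one projector `Π_i = |v i⟩⟨v i|`. -/
def proj {ι n : Type*} (v : ι → n → ℂ) (i : ι) : Matrix n n ℂ := ketbra (v i) (v i)

/-- The family `v` is orthonormal. -/
def Orthonormal' {ι n : Type*} [Fintype n] [DecidableEq ι] (v : ι → n → ℂ) : Prop :=
  ∀ i j, star (v i) ⬝ᵥ v j = if i = j then (1 : ℂ) else 0

/-- The family of rank-one projectors from `v` is complete: `∑ i, Π_i = I`. -/
def Complete' {ι n : Type*} [Fintype ι] [Fintype n] [DecidableEq n] (v : ι → n → ℂ) : Prop :=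
  ∑ i, proj v i = 1

/-- The pinching `ρ ↦ ∑ i (Π_i ⊗ I) ρ (Π_i ⊗ I)` of a bipartite state,
for a von Neumann measurement on the first subsystem. -/
def pinch {ι A B : Type*} [Fintype ι] [Fintype A] [Fintype B] [DecidableEq B]
    (v : ι → A → ℂ) (ρ : Matrix (A × B) (A × B) ℂ) : Matrix (A × B) (A × B) ℂ :=
  ∑ i, (proj v i ⊗ₖ (1 : Matrix B B ℂ)) * ρ * (proj v i ⊗ₖ (1 : Matrix B B ℂ))

/-- The pinching `ρ ↦ ∑ i Π_i ρ Π_i` on a single system. -/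
def pinchA {ι A : Type*} [Fintype ι] [Fintype A]
    (v : ι → A → ℂ) (ρ : Matrix A A ℂ) : Matrix A A ℂ :=
  ∑ i, proj v i * ρ * proj v i

/-- Partial trace over the first tensor factor. -/
def trFst {M n : Type*} [Fintype M] (ρ : Matrix (M × n) (M × n) ℂ) : Matrix n n ℂ :=
  fun i j => ∑ m, ρ (m, i) (m, j)

/-- Partial trace over the second tensor factor. -/
def trSnd {n B : Type*} [Fintype B] (ρ : Matrix (n × B) (n × B) ℂ) : Matrix n n ℂ :=
  fun a a' => ∑ b, ρ (a, b) (a', b)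

/-- The operator `O_{ij} = (⟨i^A| ⊗ I) ρ (|j^A⟩ ⊗ I)` on `H_B`. -/
def Oij {ι A B : Type*} [Fintype A] [Fintype B] (v : ι → A → ℂ)
    (ρ : Matrix (A × B) (A × B) ℂ) (i j : ι) : Matrix B B ℂ :=
  fun k l => ∑ a, ∑ b, star (v i a) * ρ (a, k) (b, l) * v j b

/-- The post-measurement state `ρ₂ = ∑_{i,j} |i^M⟩⟨j^M| ⊗ |i^A⟩⟨j^A| ⊗ O_{ij}`. -/
def rho2 {ι M A B : Type*} [Fintype ι] [Fintype A] [Fintype B]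
    (w : ι → M → ℂ) (v : ι → A → ℂ) (ρ : Matrix (A × B) (A × B) ℂ) :
    Matrix (M × A × B) (M × A × B) ℂ :=
  ∑ i, ∑ j, ketbra (w i) (w j) ⊗ₖ (ketbra (v i) (v j) ⊗ₖ Oij v ρ i j)

/-- The outcome probability `p_i = Tr[(Π_i ⊗ I) ρ (Π_i ⊗ I)]`. -/
def pOut {ι A B : Type*} [Fintype A] [Fintype B] [DecidableEq B]
    (v : ι → A → ℂ) (ρ : Matrix (A × B) (A × B) ℂ) (i : ι) : ℝ :=
  (((proj v i ⊗ₖ (1 : Matrix B B ℂ)) * ρ * (proj v i ⊗ₖ (1 : Matrix B B ℂ))).trace).re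

/-- The post-measurement state `ρ_i = (Π_i ⊗ I) ρ (Π_i ⊗ I) / p_i`. -/
def postState {ι A B : Type*} [Fintype A] [Fintype B] [DecidableEq B]
    (v : ι → A → ℂ) (ρ : Matrix (A × B) (A × B) ℂ) (i : ι) : Matrix (A × B) (A × B) ℂ :=
  ((pOut v ρ i : ℂ))⁻¹ • ((proj v i ⊗ₖ (1 : Matrix B B ℂ)) * ρ * (proj v i ⊗ₖ (1 : Matrix B B ℂ)))

/-- The average post-measurement entropy `∑ i p_i S(ρ_i)`. -/
def condEnt {ι A B : Type*} [Fintype ι] [Fintype A] [DecidableEq A] [Fintype B] [DecidableEq B]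
    (v : ι → A → ℂ) (ρ : Matrix (A × B) (A × B) ℂ) : ℝ :=
  ∑ i, pOut v ρ i * vnEntropy (postState v ρ i)

/-- A von Neumann measurement on `H_A`: a complete set of rank-one orthogonal projectors,
given by an orthonormal basis of `H_A`. -/
def IsMeas {A : Type*} [Fintype A] [DecidableEq A] (v : A → A → ℂ) : Prop :=
  Orthonormal' v ∧ Complete' v

/-- `ρ` is a classical-quantum state:
`ρ = ∑ i p_i |i^A⟩⟨i^A| ⊗ ρ_i^B` for some orthonormal basis of `H_A`. -/
def IsCQ {A B : Type*} [Fintype A] [DecidableEq A] [Fintype B]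
    (ρ : Matrix (A × B) (A × B) ℂ) : Prop :=
  ∃ (v : A → A → ℂ) (p : A → ℝ) (σ : A → Matrix B B ℂ),
    Orthonormal' v ∧ Complete' v ∧ (∀ i, 0 ≤ p i) ∧ ∑ i, p i = 1 ∧
    (∀ i, p i ≠ 0 → IsDensityMatrix (σ i)) ∧
    ρ = ∑ i, (p i : ℂ) • (proj v i ⊗ₖ σ i)

/-- The one-way information deficit `Δ→(ρ) = min_{Π} S(∑ᵢ (Πᵢ⊗I)ρ(Πᵢ⊗I)) - S(ρ)`. -/
def deficit {A B : Type*} [Fintype A] [DecidableEq A] [Fintype B] [DecidableEq B]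
    (ρ : Matrix (A × B) (A × B) ℂ) : ℝ :=
  sInf {x : ℝ | ∃ v : A → A → ℂ, IsMeas v ∧ x = vnEntropy (pinch v ρ)} - vnEntropy ρ

/-- The quantum discord `δ→(ρ) = S(ρ^A) - S(ρ) + min_{Π} ∑ i p_i S(ρ_i)`. -/
def discord {A B : Type*} [Fintype A] [DecidableEq A] [Fintype B] [DecidableEq B]
    (ρ : Matrix (A × B) (A × B) ℂ) : ℝ :=
  vnEntropy (trSnd ρ) - vnEntropy ρ +
    sInf {x : ℝ | ∃ v : A → A → ℂ, IsMeas v ∧ x = condEnt v ρ}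

/-- The application `ρ ↦ ∑ k (I ⊗ K_k) ρ (I ⊗ K_k)†` of a channel (in Kraus form) on `B`. -/
def applyChanB {A B B' κ : Type*} [Fintype A] [DecidableEq A] [Fintype B] [Fintype κ]
    (K : κ → Matrix B' B ℂ) (ρ : Matrix (A × B) (A × B) ℂ) :
    Matrix (A × B') (A × B') ℂ :=
  ∑ k, ((1 : Matrix A A ℂ) ⊗ₖ K k) * ρ * ((1 : Matrix A A ℂ) ⊗ₖ K k)ᴴ

end
/-!
For a von Neumann measurement `Π_i = |i⟩⟨i|` on `A`, the pinching `P(ρ) = ∑ (Π_i ⊗ 1) ρ (Π_i ⊗ 1)`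
commutes with every `Π_i ⊗ 1`, hence with `log P(ρ)`, so `Tr P(ρ) log P(ρ) = Tr ρ log P(ρ)` and
`S(P(ρ)) - S(ρ) = S(ρ ‖ P(ρ))`. Klein's inequality makes this nonnegative, with equality only if
`P(ρ) = ρ`, i.e. if `ρ` is block diagonal in the basis `|i⟩`, which is the classical-quantum form.
The minimum over measurements is attained: orthonormal bases form a compact set, and `S` is
continuous on density matrices since `-x log x` is a uniform limit of polynomials on `[0, 1]`.
-/

section Spectral

open Polynomial Filter Topology

variable {n : Type*} [Fintype n] [DecidableEq n] {σ : Matrix n n ℂ}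

lemma Matrix.IsHermitian.matLog_eq_cfc (hσ : σ.IsHermitian) : matLog σ = cfc Real.log σ := by
  rw [matLog, dif_pos hσ, hσ.cfc_eq, IsHermitian.cfc, Unitary.conjStarAlgAut_apply]
  rfl

lemma Matrix.IsHermitian.trace_cfc (hσ : σ.IsHermitian) (f : ℝ → ℝ) :
    (cfc f σ).trace = ∑ i, (f (hσ.eigenvalues i) : ℂ) := by
  rw [hσ.cfc_eq, IsHermitian.cfc, Unitary.conjStarAlgAut_apply, trace_mul_cycle,
    Unitary.coe_star_mul_self, Matrix.one_mul, trace_diagonal]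
  rfl

lemma Matrix.IsHermitian.re_trace_mul_matLog_self (hσ : σ.IsHermitian) :
    (σ * matLog σ).trace.re = ∑ i, hσ.eigenvalues i * Real.log (hσ.eigenvalues i) := by
  have h : σ * matLog σ = cfc (fun x => x * Real.log x) σ := by
    rw [hσ.matLog_eq_cfc, cfc_mul _ _ σ (hg := σ.finite_real_spectrum.continuousOn _), cfc_id' ℝ σ]
  rw [h, hσ.trace_cfc, Complex.re_sum]
  rfl

lemma Matrix.IsHermitian.vnEntropy_eq_neg_re_trace (hσ : σ.IsHermitian) :
    vnEntropy σ = -(σ * matLog σ).trace.re := by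
  rw [hσ.re_trace_mul_matLog_self, vnEntropy, dif_pos hσ, ← Finset.sum_neg_distrib]
  simp only [Real.negMulLog, neg_mul]

lemma IsDensityMatrix.eigenvalues_mem_Icc (hσ : IsDensityMatrix σ) (i : n) :
    hσ.1.1.eigenvalues i ∈ Set.Icc (0 : ℝ) 1 := by
  have htr : ∑ j, hσ.1.1.eigenvalues j = 1 := by
    simpa using congrArg Complex.re (hσ.1.1.trace_eq_sum_eigenvalues.symm.trans hσ.2)
  refine ⟨hσ.1.eigenvalues_nonneg i, htr ▸ ?_⟩
  exact Finset.single_le_sum (fun j _ => hσ.1.eigenvalues_nonneg j) (Finset.mem_univ i)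

lemma Matrix.IsHermitian.re_trace_aeval (hσ : σ.IsHermitian) (q : ℝ[X]) :
    (aeval σ q).trace.re = ∑ i, q.eval (hσ.eigenvalues i) := by
  rw [← cfc_polynomial q σ, hσ.trace_cfc, Complex.re_sum]
  rfl

lemma continuousOn_vnEntropy :
    ContinuousOn (vnEntropy : Matrix n n ℂ → ℝ) {σ | IsDensityMatrix σ} := by
  choose q hq using fun k : ℕ => exists_polynomial_near_of_continuousOn 0 1 Real.negMulLog
    Real.continuous_negMulLog.continuousOn (1 / (k + 1)) (by positivity)
  refine TendstoUniformlyOn.continuousOn (p := atTop)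
    (F := fun k σ => (aeval σ (q k)).trace.re) ?_ (Frequently.of_forall fun k =>
      (Complex.continuous_re.comp (q k).continuous_aeval.matrix_trace).continuousOn)
  rw [Metric.tendstoUniformlyOn_iff]
  intro ε hε
  have hlim : Tendsto (fun k : ℕ => Fintype.card n * (1 / ((k : ℝ) + 1))) atTop (𝓝 0) := by
    simpa using tendsto_one_div_add_atTop_nhds_zero_nat.const_mul (Fintype.card n : ℝ)
  filter_upwards [hlim.eventually (gt_mem_nhds hε)] with k hk σ hσ
  rw [Real.dist_eq, vnEntropy, dif_pos hσ.1.1, hσ.1.1.re_trace_aeval, ← Finset.sum_sub_distrib]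
  calc |∑ i, (Real.negMulLog (hσ.1.1.eigenvalues i) - (q k).eval (hσ.1.1.eigenvalues i))|
      ≤ ∑ i, |Real.negMulLog (hσ.1.1.eigenvalues i) - (q k).eval (hσ.1.1.eigenvalues i)| :=
        Finset.abs_sum_le_sum_abs _ _
    _ ≤ ∑ _i : n, 1 / ((k : ℝ) + 1) := Finset.sum_le_sum fun i _ => by
        rw [abs_sub_comm]; exact (hq k _ (hσ.eigenvalues_mem_Icc i)).le
    _ < ε := by simpa using hk

end Spectral

section KleinTerm

open InformationTheory Real

noncomputable def kleinTerm (a b : ℝ) : ℝ := a * log a - a * log b - a + b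

lemma kleinTerm_eq_mul_klFun {a b : ℝ} (hb : 0 < b) : kleinTerm a b = b * klFun (a / b) := by
  rcases eq_or_ne a 0 with rfl | ha
  · simp [kleinTerm, klFun]
  · rw [kleinTerm, klFun, log_div ha hb.ne']
    field_simp
    ring

lemma kleinTerm_nonneg {a b : ℝ} (ha : 0 ≤ a) (hb : 0 ≤ b) (hab : b = 0 → a = 0) :
    0 ≤ kleinTerm a b := by
  rcases hb.eq_or_lt with rfl | hb
  · simp [kleinTerm, hab rfl]
  · rw [kleinTerm_eq_mul_klFun hb]
    exact mul_nonneg hb.le (klFun_nonneg (div_nonneg ha hb.le))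

lemma eq_of_kleinTerm_eq_zero {a b : ℝ} (ha : 0 ≤ a) (hb : 0 ≤ b) (hab : b = 0 → a = 0)
    (h : kleinTerm a b = 0) : a = b := by
  rcases hb.eq_or_lt with rfl | hb
  · exact hab rfl
  · rw [kleinTerm_eq_mul_klFun hb, mul_eq_zero, klFun_eq_zero_iff (div_nonneg ha hb.le),
      div_eq_one_iff_eq hb.ne'] at h
    exact h.resolve_left hb.ne'

end KleinTerm

section Klein

variable {n : Type*} [Fintype n] [DecidableEq n]

lemma sum_norm_sq_row_of_mem_unitaryGroup {U : Matrix n n ℂ} (hU : U ∈ unitaryGroup n ℂ)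
    (i : n) : ∑ j, ‖U i j‖ ^ 2 = 1 := by
  have h := congr_fun₂ (mem_unitaryGroup_iff.mp hU) i i
  simp only [mul_apply, star_apply, RCLike.star_def, RCLike.mul_conj, one_apply_eq] at h
  exact_mod_cast congrArg Complex.re h

lemma sum_norm_sq_col_of_mem_unitaryGroup {U : Matrix n n ℂ} (hU : U ∈ unitaryGroup n ℂ)
    (j : n) : ∑ i, ‖U i j‖ ^ 2 = 1 := by
  simpa [star_apply] using sum_norm_sq_row_of_mem_unitaryGroup (Unitary.star_mem hU) j

lemma trace_diagonal_mul_star_mul_diagonal_mul (a b : n → ℝ) (W : Matrix n n ℂ) :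
    (diagonal (fun i => (a i : ℂ)) * (star W * diagonal (fun j => (b j : ℂ)) * W)).trace
      = ∑ i, ∑ j, ((‖W j i‖ ^ 2 * (a i * b j) : ℝ) : ℂ) := by
  simp only [trace, diag_apply, diagonal_mul]
  simp only [mul_apply, star_apply, RCLike.star_def, diagonal_apply, mul_ite, mul_zero,
    Finset.sum_ite_eq', Finset.mem_univ, if_true, Finset.mul_sum]
  refine Finset.sum_congr rfl fun i _ => Finset.sum_congr rfl fun j _ => ?_
  push_cast
  linear_combination ((a i : ℂ) * (b j : ℂ)) * Complex.conj_mul' (W j i)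

variable {ρ σ : Matrix n n ℂ}

noncomputable def eigenOverlap (hρ : ρ.IsHermitian) (hσ : σ.IsHermitian) : Matrix n n ℂ :=
  star (hσ.eigenvectorUnitary : Matrix n n ℂ) * hρ.eigenvectorUnitary

lemma eigenOverlap_mem_unitaryGroup (hρ : ρ.IsHermitian) (hσ : σ.IsHermitian) :
    eigenOverlap hρ hσ ∈ unitaryGroup n ℂ :=
  (star hσ.eigenvectorUnitary * hρ.eigenvectorUnitary).2

lemma eigenOverlap_apply (hρ : ρ.IsHermitian) (hσ : σ.IsHermitian) (i j : n) :
    eigenOverlap hρ hσ j i = star ⇑(hσ.eigenvectorBasis j) ⬝ᵥ ⇑(hρ.eigenvectorBasis i) := by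
  simp [eigenOverlap, mul_apply, dotProduct, star_apply]

lemma re_trace_mul_matLog (hρ : ρ.IsHermitian) (hσ : σ.IsHermitian) :
    (ρ * matLog σ).trace.re = ∑ i, ∑ j, ‖eigenOverlap hρ hσ j i‖ ^ 2 *
      (hρ.eigenvalues i * Real.log (hσ.eigenvalues j)) := by
  set U : Matrix n n ℂ := (hρ.eigenvectorUnitary : Matrix n n ℂ)
  set V : Matrix n n ℂ := (hσ.eigenvectorUnitary : Matrix n n ℂ)
  have hρU : ρ = U * diagonal (fun i => (hρ.eigenvalues i : ℂ)) * star U := hρ.spectral_theorem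
  have hσV : matLog σ = V * diagonal (fun j => (Real.log (hσ.eigenvalues j) : ℂ)) * star V := by
    rw [matLog, dif_pos hσ]
  have hW : star (eigenOverlap hρ hσ) = star U * V := by simp [eigenOverlap, U, V]
  have hcycle : (ρ * matLog σ).trace = (diagonal (fun i => (hρ.eigenvalues i : ℂ)) *
      (star (eigenOverlap hρ hσ) * diagonal (fun j => (Real.log (hσ.eigenvalues j) : ℂ)) *
        eigenOverlap hρ hσ)).trace := by
    conv_lhs => rw [hρU, hσV]
    rw [hW, eigenOverlap]
    simp only [Matrix.mul_assoc]
    rw [trace_mul_comm U]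
    simp only [Matrix.mul_assoc]
    rfl
  rw [hcycle, trace_diagonal_mul_star_mul_diagonal_mul]
  simp only [Complex.re_sum, Complex.ofReal_re]

lemma eigenvalue_eq_zero_of_eigenOverlap_ne_zero (hρ : ρ.IsHermitian) (hσ : σ.IsHermitian)
    (hker : ∀ x, σ *ᵥ x = 0 → ρ *ᵥ x = 0) {i j : n} (hW : eigenOverlap hρ hσ j i ≠ 0)
    (hμ : hσ.eigenvalues j = 0) : hρ.eigenvalues i = 0 := by
  set u := ⇑(hρ.eigenvectorBasis i)
  set v := ⇑(hσ.eigenvectorBasis j)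
  have hρv : ρ *ᵥ v = 0 := hker v (by rw [hσ.mulVec_eigenvectorBasis, hμ, zero_smul])
  have hvρ : star v ᵥ* ρ = 0 := by
    rw [← hρ.eq, ← star_mulVec, hρv, star_zero]
  have h : (hρ.eigenvalues i : ℂ) * (star v ⬝ᵥ u) = 0 := by
    rw [← smul_eq_mul, ← dotProduct_smul, Complex.coe_smul, ← hρ.mulVec_eigenvectorBasis,
      dotProduct_mulVec, hvρ, zero_dotProduct]
  rw [eigenOverlap_apply] at hW
  exact_mod_cast (mul_eq_zero.mp h).resolve_right hW

lemma eq_of_eigenvalues_eq_of_eigenOverlap_ne_zero (hρ : ρ.IsHermitian) (hσ : σ.IsHermitian)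
    (h : ∀ i j, eigenOverlap hρ hσ j i ≠ 0 → hρ.eigenvalues i = hσ.eigenvalues j) : ρ = σ := by
  set U : Matrix n n ℂ := (hρ.eigenvectorUnitary : Matrix n n ℂ)
  set V : Matrix n n ℂ := (hσ.eigenvectorUnitary : Matrix n n ℂ)
  set Λ := diagonal fun i => (hρ.eigenvalues i : ℂ)
  set M := diagonal fun j => (hσ.eigenvalues j : ℂ)
  have hW : eigenOverlap hρ hσ = star V * U := rfl
  have hUU : U * star U = 1 := Unitary.mul_star_self_of_mem hρ.eigenvectorUnitary.2
  have hVV : V * star V = 1 := Unitary.mul_star_self_of_mem hσ.eigenvectorUnitary.2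
  have hMW : M * eigenOverlap hρ hσ = eigenOverlap hρ hσ * Λ := by
    ext j i
    rw [diagonal_mul, mul_diagonal]
    by_cases hW : eigenOverlap hρ hσ j i = 0
    · simp [hW]
    · rw [h i j hW, mul_comm]
  have hσU : σ * U = U * Λ := by
    have hσ' : σ = V * M * star V := hσ.spectral_theorem
    calc σ * U = V * (M * eigenOverlap hρ hσ) := by
          conv_lhs => rw [hσ']
          rw [hW]; simp only [Matrix.mul_assoc]
      _ = V * star V * U * Λ := by rw [hMW, hW]; simp only [Matrix.mul_assoc]
      _ = U * Λ := by rw [hVV, Matrix.one_mul]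
  calc ρ = U * Λ * star U := hρ.spectral_theorem
    _ = σ := by rw [← hσU, Matrix.mul_assoc, hUU, Matrix.mul_one]

lemma relEntropy_eq_sum_kleinTerm (hρ : ρ.IsHermitian) (hσ : σ.IsHermitian)
    (htr : ρ.trace = σ.trace) :
    relEntropy ρ σ = ∑ i, ∑ j, ‖eigenOverlap hρ hσ j i‖ ^ 2 *
      kleinTerm (hρ.eigenvalues i) (hσ.eigenvalues j) := by
  -- the weights `‖W j i‖ ^ 2` are doubly stochastic and the traces agree, so the linear part
  -- `- a + b` of `kleinTerm` adds nothing to the sum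
  have hW := eigenOverlap_mem_unitaryGroup hρ hσ
  have hsum : ∑ i, hρ.eigenvalues i = ∑ j, hσ.eigenvalues j := by
    rw [hρ.trace_eq_sum_eigenvalues, hσ.trace_eq_sum_eigenvalues] at htr
    exact_mod_cast htr
  have hcol : ∀ f : n → ℝ, ∑ i, ∑ j, ‖eigenOverlap hρ hσ j i‖ ^ 2 * f i = ∑ i, f i := fun f => by
    simp only [← Finset.sum_mul, sum_norm_sq_col_of_mem_unitaryGroup hW, one_mul]
  have hrow : ∀ g : n → ℝ, ∑ i, ∑ j, ‖eigenOverlap hρ hσ j i‖ ^ 2 * g j = ∑ j, g j := fun g => by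
    rw [Finset.sum_comm]
    simp only [← Finset.sum_mul, sum_norm_sq_row_of_mem_unitaryGroup hW, one_mul]
  simp only [kleinTerm, mul_add, mul_sub, Finset.sum_add_distrib, Finset.sum_sub_distrib]
  rw [hcol, hcol, hrow, hsum, relEntropy, Matrix.mul_sub, Matrix.trace_sub, Complex.sub_re,
    hρ.re_trace_mul_matLog_self, re_trace_mul_matLog hρ hσ]
  ring

lemma norm_sq_eigenOverlap_mul_kleinTerm_nonneg (hρ : ρ.PosSemidef) (hσ : σ.PosSemidef)
    (hker : ∀ x, σ *ᵥ x = 0 → ρ *ᵥ x = 0) (i j : n) :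
    0 ≤ ‖eigenOverlap hρ.1 hσ.1 j i‖ ^ 2 * kleinTerm (hρ.1.eigenvalues i) (hσ.1.eigenvalues j) := by
  by_cases hW : eigenOverlap hρ.1 hσ.1 j i = 0
  · simp [hW]
  · exact mul_nonneg (sq_nonneg _) (kleinTerm_nonneg (hρ.eigenvalues_nonneg i)
      (hσ.eigenvalues_nonneg j) (eigenvalue_eq_zero_of_eigenOverlap_ne_zero hρ.1 hσ.1 hker hW))

/-- Klein's inequality. -/
theorem relEntropy_nonneg (hρ : ρ.PosSemidef) (hσ : σ.PosSemidef) (htr : ρ.trace = σ.trace)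
    (hker : ∀ x, σ *ᵥ x = 0 → ρ *ᵥ x = 0) :
    0 ≤ relEntropy ρ σ := by
  rw [relEntropy_eq_sum_kleinTerm hρ.1 hσ.1 htr]
  exact Finset.sum_nonneg fun i _ => Finset.sum_nonneg fun j _ =>
    norm_sq_eigenOverlap_mul_kleinTerm_nonneg hρ hσ hker i j

theorem eq_of_relEntropy_eq_zero (hρ : ρ.PosSemidef) (hσ : σ.PosSemidef)
    (htr : ρ.trace = σ.trace) (hker : ∀ x, σ *ᵥ x = 0 → ρ *ᵥ x = 0)
    (h : relEntropy ρ σ = 0) : ρ = σ := by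
  rw [relEntropy_eq_sum_kleinTerm hρ.1 hσ.1 htr, Finset.sum_eq_zero_iff_of_nonneg fun i _ =>
    Finset.sum_nonneg fun j _ => norm_sq_eigenOverlap_mul_kleinTerm_nonneg hρ hσ hker i j] at h
  refine eq_of_eigenvalues_eq_of_eigenOverlap_ne_zero hρ.1 hσ.1 fun i j hW => ?_
  have hterm := (Finset.sum_eq_zero_iff_of_nonneg fun j _ =>
    norm_sq_eigenOverlap_mul_kleinTerm_nonneg hρ hσ hker i j).mp (h i (Finset.mem_univ _)) j
    (Finset.mem_univ _)
  rw [mul_eq_zero, or_iff_right (by positivity)] at hterm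
  exact eq_of_kleinTerm_eq_zero (hρ.eigenvalues_nonneg i) (hσ.eigenvalues_nonneg j)
    (eigenvalue_eq_zero_of_eigenOverlap_ne_zero hρ.1 hσ.1 hker hW) hterm

end Klein

section Pinching

variable {n ι : Type*} [Fintype n] [DecidableEq n] [Fintype ι]

structure IsPVM (P : ι → Matrix n n ℂ) : Prop where
  isHermitian : ∀ k, (P k).IsHermitian
  mul_self : ∀ k, P k * P k = P k
  mul_eq_zero : ∀ k l, k ≠ l → P k * P l = 0
  sum_eq_one : ∑ k, P k = 1

def pinching (P : ι → Matrix n n ℂ) (ρ : Matrix n n ℂ) : Matrix n n ℂ := ∑ k, P k * ρ * P k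

namespace IsPVM

variable {P : ι → Matrix n n ℂ} {ρ : Matrix n n ℂ}

lemma mul_pinching (hP : IsPVM P) (k : ι) : P k * pinching P ρ = P k * ρ * P k := by
  rw [pinching, Matrix.mul_sum, Finset.sum_eq_single k]
  · simp only [← Matrix.mul_assoc, hP.mul_self]
  · intro l _ hlk
    simp only [← Matrix.mul_assoc, hP.mul_eq_zero k l hlk.symm, Matrix.zero_mul]
  · simp

lemma pinching_mul (hP : IsPVM P) (k : ι) : pinching P ρ * P k = P k * ρ * P k := by
  rw [pinching, Matrix.sum_mul, Finset.sum_eq_single k]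
  · simp only [Matrix.mul_assoc, hP.mul_self]
  · intro l _ hlk
    simp only [Matrix.mul_assoc, hP.mul_eq_zero l k hlk, Matrix.mul_zero]
  · simp

lemma commute_pinching (hP : IsPVM P) (k : ι) : Commute (P k) (pinching P ρ) :=
  (hP.mul_pinching k).trans (hP.pinching_mul k).symm

lemma pinching_eq_self_of_commute (hP : IsPVM P) (h : ∀ k, Commute (P k) ρ) :
    pinching P ρ = ρ := by
  calc pinching P ρ = ∑ k, ρ * P k := Finset.sum_congr rfl fun k _ => by
        rw [(h k).eq, Matrix.mul_assoc, hP.mul_self]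
    _ = ρ := by rw [← Matrix.mul_sum, hP.sum_eq_one, Matrix.mul_one]

lemma trace_pinching_mul (hP : IsPVM P) {X : Matrix n n ℂ} (hX : ∀ k, Commute (P k) X) :
    (pinching P ρ * X).trace = (ρ * X).trace := by
  calc (pinching P ρ * X).trace = ∑ k, (ρ * (P k * X)).trace := by
        rw [pinching, Matrix.sum_mul, trace_sum]
        refine Finset.sum_congr rfl fun k _ => ?_
        rw [Matrix.mul_assoc, Matrix.mul_assoc, trace_mul_comm (P k)]
        simp only [Matrix.mul_assoc]
        rw [← (hX k).eq, ← Matrix.mul_assoc (P k) (P k), hP.mul_self]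
    _ = (ρ * X).trace := by
        rw [← trace_sum, ← Matrix.mul_sum, ← Matrix.sum_mul, hP.sum_eq_one, Matrix.one_mul]

lemma trace_pinching (hP : IsPVM P) : (pinching P ρ).trace = ρ.trace := by
  simpa using hP.trace_pinching_mul (ρ := ρ) fun k => Commute.one_right (P k)

lemma isHermitian_pinching (hP : IsPVM P) (hρ : ρ.IsHermitian) :
    (pinching P ρ).IsHermitian :=
  isSelfAdjoint_sum _ fun k _ => by
    simpa only [(hP.isHermitian k).eq] using
      (isHermitian_mul_mul_conjTranspose (P k) hρ).isSelfAdjoint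

lemma posSemidef_pinching (hP : IsPVM P) (hρ : ρ.PosSemidef) : (pinching P ρ).PosSemidef :=
  posSemidef_sum _ fun k _ => by
    simpa only [(hP.isHermitian k).eq] using hρ.mul_mul_conjTranspose_same (P k)

lemma mulVec_eq_zero_of_pinching (hP : IsPVM P) (hρ : ρ.PosSemidef) {x : n → ℂ}
    (hx : pinching P ρ *ᵥ x = 0) : ρ *ᵥ x = 0 := by
  have hterm : ∀ k, star x ⬝ᵥ (P k * ρ * P k) *ᵥ x = star (P k *ᵥ x) ⬝ᵥ ρ *ᵥ (P k *ᵥ x) :=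
    fun k => by
      rw [← mulVec_mulVec, ← mulVec_mulVec, dotProduct_mulVec, star_mulVec, (hP.isHermitian k).eq]
  have hsum : ∑ k, star (P k *ᵥ x) ⬝ᵥ ρ *ᵥ (P k *ᵥ x) = 0 := by
    simp only [← hterm, ← dotProduct_sum, ← sum_mulVec]
    rw [← pinching, hx, dotProduct_zero]
  have hzero : ∀ k, ρ *ᵥ (P k *ᵥ x) = 0 := fun k =>
    (hρ.dotProduct_mulVec_zero_iff _).mp ((Finset.sum_eq_zero_iff_of_nonneg fun k _ =>
      hρ.dotProduct_mulVec_nonneg (P k *ᵥ x)).mp hsum k (Finset.mem_univ k))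
  calc ρ *ᵥ x = ∑ k, ρ *ᵥ (P k *ᵥ x) := by
        rw [← mulVec_sum, ← sum_mulVec, hP.sum_eq_one, one_mulVec]
    _ = 0 := Finset.sum_eq_zero fun k _ => hzero k

lemma vnEntropy_pinching_sub (hP : IsPVM P) (hρ : ρ.IsHermitian) :
    vnEntropy (pinching P ρ) - vnEntropy ρ = relEntropy ρ (pinching P ρ) := by
  have hσ := hP.isHermitian_pinching hρ
  have hlog : ∀ k, Commute (P k) (matLog (pinching P ρ)) := fun k => by
    rw [hσ.matLog_eq_cfc]
    exact ((hP.commute_pinching k).symm.cfc_real Real.log).symm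
  rw [hσ.vnEntropy_eq_neg_re_trace, hρ.vnEntropy_eq_neg_re_trace, relEntropy, Matrix.mul_sub,
    trace_sub, Complex.sub_re, hP.trace_pinching_mul hlog]
  ring

lemma vnEntropy_le_vnEntropy_pinching (hP : IsPVM P) (hρ : ρ.PosSemidef) :
    vnEntropy ρ ≤ vnEntropy (pinching P ρ) := by
  have := relEntropy_nonneg hρ (hP.posSemidef_pinching hρ) hP.trace_pinching.symm
    fun x => hP.mulVec_eq_zero_of_pinching hρ
  linarith [hP.vnEntropy_pinching_sub hρ.1]

lemma pinching_eq_self_of_vnEntropy_eq (hP : IsPVM P) (hρ : ρ.PosSemidef)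
    (h : vnEntropy (pinching P ρ) = vnEntropy ρ) : pinching P ρ = ρ :=
  (eq_of_relEntropy_eq_zero hρ (hP.posSemidef_pinching hρ) hP.trace_pinching.symm
    (fun x => hP.mulVec_eq_zero_of_pinching hρ)
    (by rw [← hP.vnEntropy_pinching_sub hρ.1, h, sub_self])).symm

end IsPVM

end Pinching

section Measurement

variable {ι A B : Type*}

lemma proj_isHermitian (v : ι → A → ℂ) (i : ι) : (proj v i).IsHermitian := by
  ext a b
  simp [proj, ketbra, vecMulVec_apply, mul_comm]

lemma proj_mul_proj [Fintype A] [DecidableEq ι] {v : ι → A → ℂ} (hv : Orthonormal' v) (i j : ι) :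
    proj v i * proj v j = if i = j then proj v i else 0 := by
  rw [proj, proj, ketbra, ketbra, vecMulVec_mul_vecMulVec, hv]
  split_ifs <;> simp_all

lemma commute_proj [Fintype A] [DecidableEq ι] {v : ι → A → ℂ} (hv : Orthonormal' v) (i j : ι) :
    Commute (proj v i) (proj v j) := by
  rw [Commute, SemiconjBy, proj_mul_proj hv, proj_mul_proj hv]
  by_cases h : i = j
  · subst h; rfl
  · rw [if_neg h, if_neg (Ne.symm h)]

lemma trace_proj [Fintype A] [DecidableEq ι] {v : ι → A → ℂ} (hv : Orthonormal' v) (i : ι) :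
    (proj v i).trace = 1 := by
  rw [proj, ketbra, trace_vecMulVec, dotProduct_comm, hv, if_pos rfl]

variable [Fintype A] [DecidableEq A]

lemma isPVM_proj_kronecker_one [Fintype B] [DecidableEq B] [Fintype ι] [DecidableEq ι]
    {v : ι → A → ℂ} (hv : Orthonormal' v) (hc : Complete' v) :
    IsPVM fun i => proj v i ⊗ₖ (1 : Matrix B B ℂ) where
  isHermitian i := by
    rw [IsHermitian, conjTranspose_kronecker, (proj_isHermitian v i).eq, conjTranspose_one]
  mul_self i := by rw [← mul_kronecker_mul, proj_mul_proj hv, if_pos rfl, Matrix.one_mul]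
  mul_eq_zero i j hij := by
    rw [← mul_kronecker_mul, proj_mul_proj hv, if_neg hij, zero_kronecker]
  sum_eq_one := by
    rw [← one_kronecker_one, ← hc]
    ext ⟨a, b⟩ ⟨a', b'⟩
    simp [Matrix.sum_apply, Finset.sum_mul]

lemma isMeas_iff_transpose_mem_unitaryGroup (v : A → A → ℂ) :
    IsMeas v ↔ (of v)ᵀ ∈ unitaryGroup A ℂ := by
  have horth : Orthonormal' v ↔ star (of v)ᵀ * (of v)ᵀ = 1 := by
    simp only [Orthonormal', ← ext_iff, mul_apply, star_apply, transpose_apply, of_apply,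
      one_apply, dotProduct, Pi.star_apply]
  have hcompl : Complete' v ↔ (of v)ᵀ * star (of v)ᵀ = 1 := by
    simp only [Complete', ← ext_iff, mul_apply, star_apply, transpose_apply, of_apply,
      Matrix.sum_apply, proj, ketbra, vecMulVec_apply, Pi.star_apply]
  rw [IsMeas, horth, hcompl, ← mem_unitaryGroup_iff, ← mem_unitaryGroup_iff', and_self]

end Measurement

section ClassicalQuantum

variable {ι A B : Type*} [Fintype A] [Fintype B] [DecidableEq B]

lemma proj_kronecker_one_mul_mul (v : ι → A → ℂ) (ρ : Matrix (A × B) (A × B) ℂ) (i : ι) :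
    (proj v i ⊗ₖ (1 : Matrix B B ℂ)) * ρ * (proj v i ⊗ₖ (1 : Matrix B B ℂ)) =
      proj v i ⊗ₖ Oij v ρ i i := by
  ext ⟨a, k⟩ ⟨b, l⟩
  simp only [mul_apply, kroneckerMap_apply, Fintype.sum_prod_type, proj, ketbra, Oij,
    vecMulVec_apply, Pi.star_apply, one_apply, mul_ite, ite_mul, mul_zero, zero_mul, mul_one,
    Finset.sum_ite_eq, Finset.sum_ite_eq', Finset.mem_univ, if_true, Finset.sum_mul,
    Finset.mul_sum]
  rw [Finset.sum_comm]
  exact Finset.sum_congr rfl fun c _ => Finset.sum_congr rfl fun d _ => by ring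

lemma posSemidef_Oij {ρ : Matrix (A × B) (A × B) ℂ} (hρ : ρ.PosSemidef) (v : ι → A → ℂ)
    (i : ι) : (Oij v ρ i i).PosSemidef := by
  set C : Matrix (A × B) B ℂ := of fun p l => v i p.1 * (1 : Matrix B B ℂ) p.2 l
  have h : Oij v ρ i i = Cᴴ * ρ * C := by
    ext k l
    simp [C, Oij, mul_apply, Fintype.sum_prod_type, one_apply, apply_ite (starRingEnd ℂ),
      Finset.sum_mul]
    rw [Finset.sum_comm]
  rw [h]
  exact hρ.conjTranspose_mul_mul_same _

variable [DecidableEq A]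

lemma isCQ_of_pinch_eq_self {v : A → A → ℂ} {ρ : Matrix (A × B) (A × B) ℂ} (hv : IsMeas v)
    (hρ : IsDensityMatrix ρ) (h : pinch v ρ = ρ) : IsCQ ρ := by
  set p : A → ℝ := fun i => (Oij v ρ i i).trace.re
  have hO := fun i => posSemidef_Oij hρ.1 v i
  have htr : ∀ i, (Oij v ρ i i).trace = p i := fun i =>
    Complex.eq_re_of_ofReal_le (hO i).trace_nonneg
  have hρ_eq : ρ = ∑ i, proj v i ⊗ₖ Oij v ρ i i := by
    conv_lhs => rw [← h, pinch]
    exact Finset.sum_congr rfl fun i _ => proj_kronecker_one_mul_mul v ρ i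
  refine ⟨v, p, fun i => (p i)⁻¹ • Oij v ρ i i, hv.1, hv.2, fun i => ?_, ?_,
    fun i hp => ⟨?_, ?_⟩, ?_⟩
  · exact (Complex.nonneg_iff.mp (hO i).trace_nonneg).1
  · have h1 := hρ.2
    rw [hρ_eq, trace_sum] at h1
    simp only [trace_kronecker, trace_proj hv.1, one_mul, htr] at h1
    exact_mod_cast h1
  · exact (hO i).smul (inv_nonneg.mpr (Complex.nonneg_iff.mp (hO i).trace_nonneg).1)
  · rw [trace_smul, htr, Complex.real_smul, ← Complex.ofReal_mul, inv_mul_cancel₀ hp,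
      Complex.ofReal_one]
  · conv_lhs => rw [hρ_eq]
    refine Finset.sum_congr rfl fun i _ => ?_
    rcases eq_or_ne (p i) 0 with hp | hp
    · have hOi : Oij v ρ i i = 0 :=
        (hO i).trace_eq_zero_iff.mp (by rw [htr, hp, Complex.ofReal_zero])
      simp [hp, hOi]
    · rw [kronecker_smul, Complex.coe_smul, smul_smul, mul_inv_cancel₀ hp, one_smul]

lemma IsCQ.exists_pinch_eq_self {ρ : Matrix (A × B) (A × B) ℂ} (h : IsCQ ρ) :
    ∃ v, IsMeas v ∧ pinch v ρ = ρ := by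
  obtain ⟨v, p, σ, hv, hc, -, -, -, rfl⟩ := h
  refine ⟨v, ⟨hv, hc⟩, (isPVM_proj_kronecker_one hv hc).pinching_eq_self_of_commute fun k => ?_⟩
  refine Commute.sum_right _ _ _ fun i _ => Commute.smul_right ?_ _
  rw [Commute, SemiconjBy, ← mul_kronecker_mul, ← mul_kronecker_mul, (commute_proj hv k i).eq,
    Matrix.one_mul, Matrix.mul_one]

end ClassicalQuantum

section Deficit

lemma continuous_proj_kronecker_one {ι A B : Type*} [DecidableEq B] (i : ι) :
    Continuous fun v : ι → A → ℂ => proj v i ⊗ₖ (1 : Matrix B B ℂ) :=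
  continuous_matrix fun p q => ((Continuous.matrix_vecMulVec (continuous_apply i)
    (continuous_apply i).star).matrix_elem p.1 q.1).mul continuous_const

lemma continuous_pinch {ι A B : Type*} [Fintype ι] [Fintype A] [Fintype B] [DecidableEq B]
    (ρ : Matrix (A × B) (A × B) ℂ) : Continuous fun v : ι → A → ℂ => pinch v ρ :=
  continuous_finsetSum _ fun i _ =>
    ((continuous_proj_kronecker_one i).matrix_mul continuous_const).matrix_mul
      (continuous_proj_kronecker_one i)

variable {A B : Type*} [Fintype A] [DecidableEq A] [Fintype B] [DecidableEq B]

lemma isCompact_setOf_isMeas : IsCompact {v : A → A → ℂ | IsMeas v} := by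
  have hset : {v : A → A → ℂ | IsMeas v} = (fun v => (of v)ᵀ) ⁻¹' unitaryGroup A ℂ :=
    Set.ext isMeas_iff_transpose_mem_unitaryGroup
  refine Metric.isCompact_of_isClosed_isBounded ?_ ?_
  · rw [hset]
    exact isClosed_unitary.preimage (by fun_prop)
  · refine (Metric.isBounded_iff_subset_closedBall 0).2 ⟨1, fun v hv => ?_⟩
    rw [Metric.mem_closedBall, dist_zero_right, pi_norm_le_iff_of_nonneg zero_le_one]
    refine fun i => (pi_norm_le_iff_of_nonneg zero_le_one).2 fun a => ?_
    exact entry_norm_bound_of_unitary ((isMeas_iff_transpose_mem_unitaryGroup v).1 hv) a i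

lemma isDensityMatrix_pinch {v : A → A → ℂ} {ρ : Matrix (A × B) (A × B) ℂ} (hv : IsMeas v)
    (hρ : IsDensityMatrix ρ) : IsDensityMatrix (pinch v ρ) :=
  have hP := isPVM_proj_kronecker_one (B := B) hv.1 hv.2
  ⟨hP.posSemidef_pinching hρ.1, hP.trace_pinching.trans hρ.2⟩

lemma exists_isMeas_forall_vnEntropy_pinch_le {ρ : Matrix (A × B) (A × B) ℂ}
    (hρ : IsDensityMatrix ρ) : ∃ v, IsMeas v ∧
      ∀ w, IsMeas w → vnEntropy (pinch v ρ) ≤ vnEntropy (pinch w ρ) :=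
  isCompact_setOf_isMeas.exists_isMinOn
    ⟨fun i a => (1 : Matrix A A ℂ) a i, (isMeas_iff_transpose_mem_unitaryGroup _).2 (one_mem _)⟩
    (continuousOn_vnEntropy.comp (continuous_pinch ρ).continuousOn
      fun _ hv => isDensityMatrix_pinch hv hρ)

lemma deficit_eq_of_forall_le {v : A → A → ℂ} {ρ : Matrix (A × B) (A × B) ℂ} (hv : IsMeas v)
    (hmin : ∀ w, IsMeas w → vnEntropy (pinch v ρ) ≤ vnEntropy (pinch w ρ)) :
    deficit ρ = vnEntropy (pinch v ρ) - vnEntropy ρ := by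
  have hleast : IsLeast {x | ∃ w, IsMeas w ∧ x = vnEntropy (pinch w ρ)} (vnEntropy (pinch v ρ)) :=
    ⟨⟨v, hv, rfl⟩, by rintro _ ⟨w, hw, rfl⟩; exact hmin w hw⟩
  rw [deficit, hleast.csInf_eq]

end Deficit

/-- the one-way information deficit is nonnegative, and vanishes
iff `ρ` is a classical-quantum state. -/
theorem deficit_nonneg_and_eq_zero_iff {A B : Type*} [Fintype A] [DecidableEq A]
    [Fintype B] [DecidableEq B]
    (ρ : Matrix (A × B) (A × B) ℂ) (hρ : IsDensityMatrix ρ) :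
    0 ≤ deficit ρ ∧ (deficit ρ = 0 ↔ IsCQ ρ) := by
  obtain ⟨v, hv, hmin⟩ := exists_isMeas_forall_vnEntropy_pinch_le hρ
  have hP := isPVM_proj_kronecker_one (B := B) hv.1 hv.2
  rw [deficit_eq_of_forall_le hv hmin, sub_nonneg, sub_eq_zero]
  refine ⟨hP.vnEntropy_le_vnEntropy_pinching hρ.1, fun h => ?_, fun hcq => ?_⟩
  · exact isCQ_of_pinch_eq_self hv hρ (hP.pinching_eq_self_of_vnEntropy_eq hρ.1 h)
  · obtain ⟨w, hw, hfix⟩ := hcq.exists_pinch_eq_self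
    exact le_antisymm ((hmin w hw).trans_eq (congrArg vnEntropy hfix))
      (hP.vnEntropy_le_vnEntropy_pinching hρ.1)
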